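/- Let λ, μ be partitions with |λ| < |μ| and n an integer. If (μ_[n] + ρ) = s_{0,j}(λ_[n] + ρ) for some j ≥ 1, then (λ,μ) form an n-pair: μ differs from λ exactly in row j and μⱼ - j = n - |λ|. -/

import Mathlib

/-- Standard basis vector of `ℤ^∞`. -/
def eps (m : ℕ) : ℕ → ℤ := fun i => if i = m then 1 else 0

/-- Transposition of coordinates `0` and `j` acting on `ℤ^∞`. -/
def swap0 (j : ℕ) (x : ℕ → ℤ) : ℕ → ℤ :=
  fun i => if i = 0 then x j else if i = j then x 0 else x i

/-- The tail coordinates `x₁ > x₂ > ⋯` are strictly decreasing. -/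
def StrictTail (x : ℕ → ℤ) : Prop := ∀ i, 1 ≤ i → x (i + 1) < x i

/-- `x` is on the `j`-th wall (`j ≥ 1`). -/
def OnWall (x : ℕ → ℤ) (j : ℕ) : Prop := 1 ≤ j ∧ x 0 = x j

/-- `x` is in the `j`-th alcove: for `j = 1` this means `x₀ > x₁`;
for `j > 1` it means `x_{j-1} > x₀ > x_j`. -/
def InAlcove (x : ℕ → ℤ) (j : ℕ) : Prop :=
  1 ≤ j ∧ (j = 1 → x 1 < x 0) ∧ (1 < j → x j < x 0 ∧ x 0 < x (j - 1))

/-- `x` is in the first alcove: all coordinates strictly decreasing. -/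
def InFirstAlcove (x : ℕ → ℤ) : Prop := ∀ i, x (i + 1) < x i

/-- A partition, recorded as a finitely supported function with `λ_i` the `i`-th part
(for `i ≥ 1`; the value at `0` is unused and required to be `0`). -/
def IsPartition (l : ℕ →₀ ℕ) : Prop := l 0 = 0 ∧ ∀ i, 1 ≤ i → l (i + 1) ≤ l i

/-- `|λ| = Σᵢ λᵢ`. -/
def psize (l : ℕ →₀ ℕ) : ℕ := l.sum fun _ v => v

/-- `λ_[n] = (n - |λ|, λ₁, λ₂, …) ∈ ℤ^∞`. -/
def lamBr (l : ℕ →₀ ℕ) (n : ℤ) : ℕ → ℤ :=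
  fun i => if i = 0 then n - psize l else (l i : ℤ)

/-- `ρ = (0, -1, -2, -3, …)`. -/
def rho : ℕ → ℤ := fun i => -(i : ℤ)

/-- `λ_[n] + ρ`. -/
def vec (l : ℕ →₀ ℕ) (n : ℤ) : ℕ → ℤ := fun i => lamBr l n i + rho i

/-- The embedding `φ_n` of the branching graph: `(λ,k) ↦ λ_[n]+ρ` for `k` even,
`λ_[n-1]+ρ` for `k` odd. -/
def phi (n : ℤ) (l : ℕ →₀ ℕ) (k : ℕ) : ℕ → ℤ :=
  if k % 2 = 0 then vec l n else vec l (n - 1)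

/-- A vertex `(λ, k)` of the branching graph `Y`: `λ ⊢ l ≤ ⌊k/2⌋`. -/
def IsVertex (l : ℕ →₀ ℕ) (k : ℕ) : Prop := IsPartition l ∧ psize l ≤ k / 2

/-- An edge `(μ, k-1) → (λ, k)` of the branching graph `Y`: either `λ = μ`,
or `k` even and `λ = μ ∪ {a}` for an addable node `a`, or `k` odd and
`λ = μ \ {a}` for a removable node `a`. -/
def BrEdge (mu lam : ℕ →₀ ℕ) (k : ℕ) : Prop :=
  lam = mu ∨
    (k % 2 = 0 ∧ ∃ j, 1 ≤ j ∧ (∀ m, m ≠ j → lam m = mu m) ∧ lam j = mu j + 1) ∨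
    (k % 2 = 1 ∧ ∃ j, 1 ≤ j ∧ (∀ m, m ≠ j → lam m = mu m) ∧ mu j = lam j + 1)

/-!
Off the coordinates `0` and `j` the reflection `s_{0,j}` is the identity, so `μ` agrees with `λ`
there. Coordinates `0` and `j` give `μⱼ - j = n - |λ|` and `λⱼ - j = n - |μ|`; subtracting,
`μⱼ - λⱼ = |μ| - |λ| > 0`.
-/

section Swap

variable (j : ℕ) (x : ℕ → ℤ)

lemma swap0_apply_zero : swap0 j x 0 = x j := rfl

lemma swap0_apply_self (hj : j ≠ 0) : swap0 j x j = x 0 := by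
  simp [swap0, hj]

lemma swap0_apply_of_ne {i : ℕ} (hi0 : i ≠ 0) (hij : i ≠ j) : swap0 j x i = x i := by
  simp [swap0, hi0, hij]

end Swap

section Vec

variable (l : ℕ →₀ ℕ) (n : ℤ)

lemma vec_zero : vec l n 0 = n - psize l := by
  simp [vec, lamBr, rho]

lemma vec_apply_of_ne_zero {i : ℕ} (hi : i ≠ 0) : vec l n i = l i - i := by
  simp [vec, lamBr, rho, hi, sub_eq_add_neg]

end Vec

theorem stmt3 (l m : ℕ →₀ ℕ) (hl : IsPartition l) (hm : IsPartition m) (n : ℤ)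
    (j : ℕ) (hj : 1 ≤ j) (hsize : psize l < psize m)
    (hrefl : vec m n = swap0 j (vec l n)) :
    (∀ i, i ≠ j → m i = l i) ∧ l j < m j ∧ (m j : ℤ) - j = n - psize l := by
  have hj0 : j ≠ 0 := by omega
  have h_zero : n - psize m = l j - j := by
    simpa only [vec_zero, swap0_apply_zero, vec_apply_of_ne_zero _ _ hj0] using congrFun hrefl 0
  have h_row : (m j : ℤ) - j = n - psize l := by
    simpa only [vec_apply_of_ne_zero _ _ hj0, swap0_apply_self _ _ hj0, vec_zero] using
      congrFun hrefl j
  refine ⟨fun i hij => ?_, by omega, h_row⟩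
  rcases eq_or_ne i 0 with rfl | hi0
  · rw [hl.1, hm.1]
  · have h_i := congrFun hrefl i
    rw [swap0_apply_of_ne _ _ hi0 hij, vec_apply_of_ne_zero _ _ hi0,
      vec_apply_of_ne_zero _ _ hi0] at h_i
    omega
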